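/- arXiv:2202.02020 — 2 statements merged into one kernel-verified Lean document; each statement's English description precedes it below -/
import Mathlib

section
/- Let $k$ be a field of characteristic $p$ and let $w(Y) = Y + w_r Y^r + O(Y^{r+1}) \in k[[Y]]$ with $w_r \neq 0$ and $r \geq 2$. If $w$ is nontorsion (no iterate of $w$ equals $Y$), then for any integer $N$ there exists $\ell \geq 0$ such that the order of vanishing of $w^{\circ p^\ell}(Y) - Y$ is at least $N$ (in particular, one can replace $w$ by an iterate $w^{\circ p^\ell}$ so that in $w^{\circ p^\ell}(Y) = Y + w'_{r'} Y^{r'} + O(Y^{r'+1})$ one has $r' \geq N$). -/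
/-!
Write `u ≡ Y + a Y^s` for congruence modulo `Y^(s+1)`. For `s ≥ 2`, substituting
`g ≡ Y + b Y^s` into `f ≡ Y + a Y^s` gives `f ∘ g ≡ Y + (a + b) Y^s`, since `g^s ≡ Y^s`.
Hence `u^{∘n} ≡ Y + n a Y^s`, and in characteristic `p` the `p`-th iterate of a series
`≡ Y mod Y^s` is `≡ Y mod Y^(s+1)`. Starting from `w ≡ Y mod Y^2`, induction on `ℓ` gives
`Y^(ℓ+2) ∣ w^{∘p^ℓ} - Y`.
-/

open PowerSeries

/-- Composition (substitution) of formal power series: `(w.comp' v)(Y) = w(v(Y))`,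
intended for `v` with zero constant coefficient. -/
noncomputable def PowerSeries.comp' {k : Type*} [CommSemiring k] (w v : PowerSeries k) :
    PowerSeries k :=
  PowerSeries.mk fun n => ∑ i ∈ Finset.range (n + 1), coeff i w * coeff n (v ^ i)

/-- `w.iter n` is the `n`-fold composition iterate `w^{∘n}` of `w`, with `w^{∘0} = Y`. -/
noncomputable def PowerSeries.iter {k : Type*} [CommSemiring k] (w : PowerSeries k) :
    ℕ → PowerSeries k
  | 0 => X
  | n + 1 => w.comp' (w.iter n)

namespace PowerSeries

variable {k : Type*} [CommRing k]

theorem comp'_eq_subst (f : k⟦X⟧) {g : k⟦X⟧} (hg : constantCoeff g = 0) :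
    f.comp' g = f.subst g := by
  ext n
  rw [comp', coeff_mk, coeff_subst' (HasSubst.of_constantCoeff_zero' hg),
    finsum_eq_sum_of_support_subset _ (s := Finset.range (n + 1))]
  · simp only [smul_eq_mul]
  · intro d hd
    rw [Finset.coe_range, Set.mem_Iio]
    by_contra! hnd
    refine hd ?_
    dsimp only
    rw [coeff_of_lt_order n, smul_zero]
    exact (Nat.cast_lt.2 (by omega)).trans_le (le_order_pow_of_constantCoeff_eq_zero d hg)

section Iterates

variable {w : k⟦X⟧}

theorem iter_one : w.iter 1 = w := by
  rw [iter, iter, comp'_eq_subst w constantCoeff_X, X_subst]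

theorem constantCoeff_iter (hw : constantCoeff w = 0) (n : ℕ) :
    constantCoeff (w.iter n) = 0 := by
  induction n with
  | zero => exact constantCoeff_X
  | succ n ih =>
    rw [iter, comp'_eq_subst w ih]
    exact constantCoeff_subst_eq_zero ih w hw

theorem iter_add (hw : constantCoeff w = 0) (m n : ℕ) :
    w.iter (m + n) = (w.iter m).subst (w.iter n) := by
  have hsubst (j : ℕ) : HasSubst (w.iter j) :=
    HasSubst.of_constantCoeff_zero' (constantCoeff_iter hw j)
  induction m with
  | zero => rw [zero_add, iter, subst_X (hsubst n)]
  | succ m ih =>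
    rw [Nat.add_right_comm, iter, comp'_eq_subst _ (constantCoeff_iter hw _), ih, iter,
      comp'_eq_subst _ (constantCoeff_iter hw m), subst_comp_subst_apply (hsubst m) (hsubst n)]

theorem iter_mul (hw : constantCoeff w = 0) (m n : ℕ) :
    w.iter (m * n) = (w.iter m).iter n := by
  induction n with
  | zero => rfl
  | succ n ih =>
    rw [Nat.mul_succ, add_comm, iter_add hw, ih, iter,
      comp'_eq_subst _ (constantCoeff_iter (constantCoeff_iter hw m) n)]

end Iterates

theorem X_pow_succ_dvd_sub_C_coeff_mul_X_pow {φ : k⟦X⟧} {s : ℕ} (h : X ^ s ∣ φ) :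
    X ^ (s + 1) ∣ φ - C (coeff s φ) * X ^ s := by
  obtain ⟨ψ, rfl⟩ := h
  rw [coeff_X_pow_mul', if_pos le_rfl, Nat.sub_self, coeff_zero_eq_constantCoeff,
    show X ^ s * ψ - C (constantCoeff ψ) * X ^ s = X ^ s * (ψ - C (constantCoeff ψ)) by ring,
    pow_succ]
  exact mul_dvd_mul_left _ (X_dvd_iff.2 (by simp))

theorem X_dvd_of_X_pow_two_dvd_sub_X {g : k⟦X⟧} (hg : X ^ 2 ∣ g - X) : X ∣ g := by
  simpa using dvd_add ((dvd_pow_self X two_ne_zero).trans hg) (dvd_refl X)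

theorem X_pow_succ_dvd_pow_sub_X_pow {g : k⟦X⟧} (hg : X ^ 2 ∣ g - X) (s : ℕ) :
    X ^ (s + 1) ∣ g ^ s - X ^ s := by
  have hXg := X_dvd_of_X_pow_two_dvd_sub_X hg
  induction s with
  | zero => simp
  | succ s ih =>
    rw [show g ^ (s + 1) - X ^ (s + 1) = g * (g ^ s - X ^ s) + X ^ s * (g - X) by ring]
    refine dvd_add ?_ ?_
    · rw [pow_succ']
      exact mul_dvd_mul hXg ih
    · rw [show s + 1 + 1 = s + 2 from rfl, pow_add]
      exact mul_dvd_mul_left _ hg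

theorem X_pow_succ_dvd_comp'_sub {s : ℕ} (hs : 2 ≤ s) {f g : k⟦X⟧} {a b : k}
    (hf : X ^ (s + 1) ∣ f - (X + C a * X ^ s)) (hg : X ^ (s + 1) ∣ g - (X + C b * X ^ s)) :
    X ^ (s + 1) ∣ f.comp' g - (X + C (a + b) * X ^ s) := by
  have hgX : X ^ 2 ∣ g - X := by
    rw [show g - X = (g - (X + C b * X ^ s)) + C b * X ^ s by ring]
    exact dvd_add ((pow_dvd_pow X (by omega)).trans hg)
      (dvd_mul_of_dvd_right (pow_dvd_pow X hs) _)
  have hXg := X_dvd_of_X_pow_two_dvd_sub_X hgX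
  have hsubst : HasSubst g := HasSubst.of_constantCoeff_zero' (X_dvd_iff.1 hXg)
  obtain ⟨F, hF⟩ := hf
  rw [sub_eq_iff_eq_add'] at hF
  rw [comp'_eq_subst f (X_dvd_iff.1 hXg), hF, subst_add hsubst, subst_add hsubst,
    subst_mul hsubst, subst_mul hsubst, subst_pow hsubst, subst_pow hsubst, subst_X hsubst,
    subst_C, show (MvPowerSeries.C a : k⟦X⟧) = C a from rfl, map_add,
    show g + C a * g ^ s + g ^ (s + 1) * F.subst g - (X + (C a + C b) * X ^ s)
      = (g - (X + C b * X ^ s)) + C a * (g ^ s - X ^ s) + g ^ (s + 1) * F.subst g by ring]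
  exact dvd_add (dvd_add hg (dvd_mul_of_dvd_right (X_pow_succ_dvd_pow_sub_X_pow hgX s) _))
    (dvd_mul_of_dvd_left (pow_dvd_pow_of_dvd hXg _) _)

theorem X_pow_succ_dvd_iter_sub {s : ℕ} (hs : 2 ≤ s) {u : k⟦X⟧} {a : k}
    (hu : X ^ (s + 1) ∣ u - (X + C a * X ^ s)) (n : ℕ) :
    X ^ (s + 1) ∣ u.iter n - (X + C (n * a) * X ^ s) := by
  induction n with
  | zero => simp [iter]
  | succ n ih =>
    rw [iter, Nat.cast_succ, add_one_mul, add_comm _ a]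
    exact X_pow_succ_dvd_comp'_sub hs hu ih

theorem X_pow_succ_dvd_iter_sub_X_of_charP (p : ℕ) [CharP k p] {s : ℕ} (hs : 2 ≤ s)
    {u : k⟦X⟧} (hu : X ^ s ∣ u - X) : X ^ (s + 1) ∣ u.iter p - X := by
  have hu' : X ^ (s + 1) ∣ u - (X + C (coeff s (u - X)) * X ^ s) := by
    rw [← sub_sub]
    exact X_pow_succ_dvd_sub_C_coeff_mul_X_pow hu
  have h := X_pow_succ_dvd_iter_sub hs hu' p
  rwa [CharP.cast_eq_zero, zero_mul, map_zero, zero_mul, add_zero] at h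

theorem X_pow_dvd_iter_pow_sub_X (p : ℕ) [CharP k p] {w : k⟦X⟧} (hw0 : constantCoeff w = 0)
    (hw1 : coeff 1 w = 1) (ℓ : ℕ) : X ^ (ℓ + 2) ∣ w.iter (p ^ ℓ) - X := by
  induction ℓ with
  | zero =>
    rw [pow_zero, iter_one, X_pow_dvd_iff]
    intro m hm
    interval_cases m <;> simp [hw0, hw1]
  | succ ℓ ih =>
    rw [pow_succ p ℓ, iter_mul hw0]
    exact X_pow_succ_dvd_iter_sub_X_of_charP p (by omega) ih

end PowerSeries

theorem iterate_order_large_general {p : ℕ} {k : Type*} [Field k] [CharP k p]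
    (w : PowerSeries k) (hw0 : constantCoeff w = 0) (hw1 : coeff 1 w = 1) :
    ∀ N : ℕ, ∃ ℓ : ℕ, (N : ℕ∞) ≤ (w.iter (p ^ ℓ) - X).order := by
  intro N
  have hdvd := X_pow_dvd_iter_pow_sub_X p hw0 hw1 N
  refine ⟨N, le_trans ?_ (nat_le_order _ _ (X_pow_dvd_iff.1 hdvd))⟩
  exact_mod_cast Nat.le_add_right N 2

/-- a nontorsion `w = Y + w_r Y^r + O(Y^{r+1})` (with `w_r ≠ 0`, `r ≥ 2`)
has iterates `w^{∘p^ℓ}` with `ord(w^{∘p^ℓ} - Y)` arbitrarily large. -/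
theorem iterate_order_large {p : ℕ} [Fact p.Prime] {k : Type*} [Field k] [CharP k p]
    (w : PowerSeries k) (r : ℕ) (hr : 2 ≤ r)
    (hw0 : constantCoeff w = 0) (hw1 : coeff 1 w = 1)
    (hwlow : ∀ j, 2 ≤ j → j < r → coeff j w = 0) (hwr : coeff r w ≠ 0)
    (hwnt : ∀ n : ℕ, 1 ≤ n → w.iter n ≠ X) :
    ∀ N : ℕ, ∃ ℓ : ℕ, (N : ℕ∞) ≤ (w.iter (p ^ ℓ) - X).order :=
  iterate_order_large_general w hw0 hw1
end

section
/- Let $k$ be a field of characteristic $p$, let $f \in Y\cdot k[[Y]]$ be nonzero with order of vanishing $n$, and let $w \in Y + Y^2 k[[Y]]$. Then $f$ separable (i.e. $f' \neq 0$) and $f$ satisfying an intertwining relation $v \circ f = f \circ w$ with $v \in Y + Y^2 k[[Y]]$, $v, w$ both having their first non-identity coefficient in degree $r$ with $r > \mathrm{ord}(f')$, forces $n = 1$. Precisely: if $\mathrm{ord}(f) = n$, $\mathrm{ord}(f') = k_0$, $v(Y) = Y + v_r Y^r + O(Y^{r+1})$, $w(Y) = Y + w_r Y^r + O(Y^{r+1})$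 with $v_r, w_r \neq 0$ and $r > k_0$, and $v \circ f = f \circ w$, then $n = 1$. -/
/-!
Suppose `n ≥ 2` and compare the coefficients of `Y ^ (k0 + r)` in `v ∘ f = f ∘ w`.
Since `v = Y + O(Y ^ r)` and `f = O(Y ^ n)`, `v ∘ f ≡ f` modulo `Y ^ (r n)`, and `r n ≥ 2 r > k0 + r`.
Writing `w = Y + δ` with `δ = O(Y ^ r)`, the binomial theorem gives `w ^ m ≡ Y ^ m + m Y ^ (m - 1) δ`
modulo `δ ^ 2`, so `f ∘ w ≡ f + f' δ` modulo `Y ^ (2 r)`. The coefficient of `Y ^ (k0 + r)` in `f' δ`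
is `f'_{k0} w_r ≠ 0`, a contradiction. (Here `r ≥ 2` because `f'_0 = f_1 = 0` forces `k0 ≥ 1`.)
-/

open PowerSeries

namespace PowerSeries

variable {R : Type*}

section CommSemiring

variable [CommSemiring R]

theorem coeff_comp' (w v : R⟦X⟧) (n : ℕ) :
    coeff n (w.comp' v) = ∑ i ∈ Finset.range (n + 1), coeff i w * coeff n (v ^ i) :=
  coeff_mk _ _

theorem coeff_pow_eq_zero_of_lt_mul {g : R⟦X⟧} {r : ℕ} (hg : ∀ j < r, coeff j g = 0) (i : ℕ)
    {j : ℕ} (hj : j < i * r) : coeff j (g ^ i) = 0 := by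
  have hdvd : X ^ (i * r) ∣ g ^ i := by
    rw [mul_comm, pow_mul]
    exact pow_dvd_pow_of_dvd (X_pow_dvd_iff.mpr hg) i
  exact X_pow_dvd_iff.mp hdvd j hj

theorem coeff_mul_add_of_forall_lt {φ ψ : R⟦X⟧} {a b : ℕ} (hφ : ∀ j < a, coeff j φ = 0)
    (hψ : ∀ j < b, coeff j ψ = 0) : coeff (a + b) (φ * ψ) = coeff a φ * coeff b ψ := by
  rw [coeff_mul, Finset.sum_eq_single (a, b)]
  · rintro ⟨i, j⟩ hij hne
    rw [Finset.HasAntidiagonal.mem_antidiagonal] at hij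
    rcases Nat.lt_or_ge i a with hi | hi
    · rw [hφ i hi, zero_mul]
    · rw [hψ j (by grind), mul_zero]
  · simp

theorem coeff_comp'_eq_coeff_of_lt_mul {v f : R⟦X⟧} {n r N : ℕ} (hv0 : constantCoeff v = 0)
    (hv1 : coeff 1 v = 1) (hvlow : ∀ j, 2 ≤ j → j < r → coeff j v = 0)
    (hf : ∀ j < n, coeff j f = 0) (hN : N < r * n) :
    coeff N (v.comp' f) = coeff N f := by
  rw [coeff_comp', Finset.sum_eq_single 1]
  · rw [hv1, pow_one, one_mul]
  · intro i _ hi1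
    rcases Nat.lt_or_ge i 2 with hi2 | hi2
    · obtain rfl : i = 0 := by omega
      rw [coeff_zero_eq_constantCoeff_apply, hv0, zero_mul]
    rcases Nat.lt_or_ge i r with hir | hir
    · rw [hvlow i hi2 hir, zero_mul]
    · rw [coeff_pow_eq_zero_of_lt_mul hf i (hN.trans_le (Nat.mul_le_mul_right n hir)), mul_zero]
  · intro h1
    rw [pow_one, hf N (by grind), mul_zero]

end CommSemiring

section CommRing

variable [CommRing R]

theorem coeff_X_add_pow {δ : R⟦X⟧} {r N : ℕ} (hδ : ∀ j < r, coeff j δ = 0) (hN : N < 2 * r)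
    (m : ℕ) : coeff N ((X + δ) ^ m) = coeff N (X ^ m) + (m : R) * coeff N (X ^ (m - 1) * δ) := by
  have hsq : X ^ (2 * r) ∣ δ ^ 2 := by
    rw [mul_comm, pow_mul]
    exact pow_dvd_pow_of_dvd (X_pow_dvd_iff.mpr hδ) 2
  have hrem := X_pow_dvd_iff.mp (hsq.trans (sq_dvd_add_pow_sub_sub δ X m)) N hN
  rw [map_sub, map_sub, sub_sub, sub_eq_zero] at hrem
  rw [hrem, mul_comm (X ^ (m - 1) * δ), ← map_natCast C, coeff_C_mul]
  ring

theorem coeff_comp'_X_add {f δ : R⟦X⟧} {r N : ℕ} (hδ : ∀ j < r, coeff j δ = 0)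
    (hN : N < 2 * r) :
    coeff N (f.comp' (X + δ)) = coeff N f + coeff N (d⁄dX R f * δ) := by
  have hδ0 : coeff 0 δ = 0 := hδ 0 (by omega)
  rw [coeff_comp']
  simp only [coeff_X_add_pow hδ hN, mul_add, Finset.sum_add_distrib, coeff_X_pow, mul_ite,
    mul_one, mul_zero, Finset.sum_ite_eq, Finset.mem_range, lt_add_one, if_true]
  congr 1
  rw [coeff_mul, Finset.Nat.sum_antidiagonal_eq_sum_range_succ_mk, Finset.sum_range_succ',
    Finset.sum_range_succ]
  simp only [Nat.cast_zero, zero_mul, mul_zero, add_zero, Nat.sub_self, hδ0]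
  refine Finset.sum_congr rfl fun a ha => ?_
  rw [Finset.mem_range] at ha
  rw [coeff_derivative, Nat.add_sub_cancel, coeff_X_pow_mul', if_pos ha.le]
  push_cast
  ring

theorem coeff_sub_X_eq_zero_of_lt {w : R⟦X⟧} {r : ℕ} (hw0 : constantCoeff w = 0)
    (hw1 : coeff 1 w = 1) (hwlow : ∀ j, 2 ≤ j → j < r → coeff j w = 0) :
    ∀ j < r, coeff j (w - X) = 0 := by
  intro j hj
  rw [map_sub, coeff_X, sub_eq_zero]
  rcases Nat.lt_or_ge j 2 with hj2 | hj2
  · interval_cases j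
    · rw [coeff_zero_eq_constantCoeff_apply, hw0, if_neg zero_ne_one]
    · rw [hw1, if_pos rfl]
  · rw [hwlow j hj2 hj, if_neg (by omega)]

end CommRing

end PowerSeries

theorem intertwining_forces_n_eq_one_general {k : Type*} [Field k] (f v w : PowerSeries k) (n k0 r : ℕ)
    (hn : 1 ≤ n) (hflow : ∀ j < n, coeff j f = 0)
    (hglow : ∀ j < k0, coeff j f.derivativeFun = 0)
    (hgk : coeff k0 f.derivativeFun ≠ 0)
    (hv0 : constantCoeff v = 0) (hv1 : coeff 1 v = 1)
    (hvlow : ∀ j, 2 ≤ j → j < r → coeff j v = 0)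
    (hw0 : constantCoeff w = 0) (hw1 : coeff 1 w = 1)
    (hwlow : ∀ j, 2 ≤ j → j < r → coeff j w = 0) (hwr : coeff r w ≠ 0)
    (hrk : k0 < r)
    (hcomm : v.comp' f = f.comp' w) :
    n = 1 := by
  by_contra hn1
  have hf' : f.derivativeFun = d⁄dX k f := rfl
  rw [hf'] at hglow hgk
  have hk0 : k0 ≠ 0 := by
    rintro rfl
    exact hgk (by rw [coeff_derivative, hflow 1 (by omega), zero_mul])
  have hδ := coeff_sub_X_eq_zero_of_lt hw0 hw1 hwlow
  have hvf : coeff (k0 + r) (v.comp' f) = coeff (k0 + r) f :=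
    coeff_comp'_eq_coeff_of_lt_mul hv0 hv1 hvlow hflow
      (by have := Nat.mul_le_mul_left r (show 2 ≤ n by omega); omega)
  have hfw : coeff (k0 + r) (f.comp' w) =
      coeff (k0 + r) f + coeff k0 (d⁄dX k f) * coeff r w := by
    conv_lhs => rw [← add_sub_cancel X w]
    rw [coeff_comp'_X_add hδ (by omega), coeff_mul_add_of_forall_lt hglow hδ, map_sub, coeff_X,
      if_neg (by omega), sub_zero]
  have hcoeff := congrArg (coeff (k0 + r)) hcomm
  rw [hvf, hfw, left_eq_add] at hcoeff
  exact mul_ne_zero hgk hwr hcoeff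

/-- if `ord f = n`, `ord f' = k0`, and `v ∘ f = f ∘ w` with
`v, w ∈ Y + Y^r·(unit)·k[[Y]] + O(Y^{r+1})`, `r > k0`, then `n = 1`. -/
theorem intertwining_forces_n_eq_one {p : ℕ} [Fact p.Prime] {k : Type*} [Field k]
    [CharP k p] (f v w : PowerSeries k) (n k0 r : ℕ)
    (hn : 1 ≤ n) (hflow : ∀ j < n, coeff j f = 0) (hfn : coeff n f ≠ 0)
    (hglow : ∀ j < k0, coeff j f.derivativeFun = 0)
    (hgk : coeff k0 f.derivativeFun ≠ 0)
    (hv0 : constantCoeff v = 0) (hv1 : coeff 1 v = 1)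
    (hvlow : ∀ j, 2 ≤ j → j < r → coeff j v = 0) (hvr : coeff r v ≠ 0)
    (hw0 : constantCoeff w = 0) (hw1 : coeff 1 w = 1)
    (hwlow : ∀ j, 2 ≤ j → j < r → coeff j w = 0) (hwr : coeff r w ≠ 0)
    (hrk : k0 < r)
    (hcomm : v.comp' f = f.comp' w) :
    n = 1 :=
  intertwining_forces_n_eq_one_general f v w n k0 r hn hflow hglow hgk hv0 hv1 hvlow hw0 hw1 hwlow
    hwr hrk hcomm
end
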